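/- For every n ≥ 1, the word τ(β⁽ⁿ⁾)·b is a prefix of ρⁿ(b), where τ(k) = b a^k is extended to words by concatenation. In particular τ(β⁽ⁿ⁾) is a subword of ρⁿ(b). -/
import Mathlib


/-- The two-letter alphabet {a, b}. -/
inductive AB | a | b
deriving DecidableEq

/-- Extension of a substitution on {a,b} to words by concatenation. -/
def applyW (σ : AB → List AB) (w : List AB) : List AB := w.flatMap σ

/-- Extension of a substitution on ℕ₀ to words by concatenation. -/
def applyN (σ : ℕ → List ℕ) (w : List ℕ) : List ℕ := w.flatMap σ

/-- The return word expansion τ(k) = b a^k. -/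
def tau (k : ℕ) : List AB := AB.b :: List.replicate k AB.a

/-- τ extended to finite sequences over ℕ₀ by concatenation. -/
def tauW (x : List ℕ) : List AB := x.flatMap tau

lemma tauW_append (x y : List ℕ) : tauW (x ++ y) = tauW x ++ tauW y := by
  simp [tauW]

lemma applyW_append (σ : AB → List AB) (x y : List AB) :
    applyW σ (x ++ y) = applyW σ x ++ applyW σ y := by
  simp [applyW]

/-- For every n ≥ 1, the word τ(β⁽ⁿ⁾)·b is a prefix of ρⁿ(b); in particular
τ(β⁽ⁿ⁾) is a subword of ρⁿ(b). -/
theorem stmt8 (p r : ℕ) (hr : 2 ≤ r) (ks : List ℕ) (hks : ks.length = r - 1)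
    (kr : ℕ) (f : ℕ → ℕ) (hf : ∀ k, f k = kr + p * k)
    (ρ : AB → List AB)
    (hρa : ρ AB.a = List.replicate p AB.a)
    (hρb : ρ AB.b = tauW (ks ++ [kr]))
    (ρbar : ℕ → List ℕ) (hρbar : ∀ k, ρbar k = ks ++ [f k])
    (β : ℕ → List ℕ) (hβ : ∀ n, β n = ((applyN ρbar)^[n] [0]).dropLast) :
    ∀ n, 1 ≤ n →
      (tauW (β n) ++ [AB.b]) <+: (applyW ρ)^[n] [AB.b] ∧
      tauW (β n) <:+: (applyW ρ)^[n] [AB.b] := by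
  -- ρ applied to a block of a's
  have hrep : ∀ k : ℕ, applyW ρ (List.replicate k AB.a) = List.replicate (p * k) AB.a := by
    intro k
    induction k with
    | zero => simp [applyW]
    | succ k ih =>
      have : List.replicate (k + 1) AB.a = List.replicate k AB.a ++ [AB.a] := by
        simp [List.replicate_succ']
      rw [this, applyW_append, ih]
      simp [applyW, hρa, ← List.replicate_add, Nat.mul_succ]
  -- key commutation on letters
  have hkey1 : ∀ k : ℕ, applyW ρ (tau k) = tauW (ρbar k) := by
    intro k
    have : tau k = [AB.b] ++ List.replicate k AB.a := rfl
    rw [this, applyW_append, hrep, hρbar k, tauW_append]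
    have h1 : applyW ρ [AB.b] = tauW ks ++ tauW [kr] := by
      simp [applyW, hρb, tauW_append]
    rw [h1, List.append_assoc]
    congr 1
    simp [tauW, tau, hf, ← List.replicate_add]
  -- key commutation on words
  have hkey : ∀ x : List ℕ, applyW ρ (tauW x) = tauW (applyN ρbar x) := by
    intro x
    induction x with
    | nil => simp [tauW, applyW, applyN]
    | cons k x ih =>
      have h1 : tauW (k :: x) = tau k ++ tauW x := rfl
      have h2 : applyN ρbar (k :: x) = ρbar k ++ applyN ρbar x := by
        simp [applyN]
      rw [h1, applyW_append, ih, h2, tauW_append, hkey1]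
  -- iterate identity
  have hiter : ∀ n : ℕ, (applyW ρ)^[n] [AB.b] = tauW ((applyN ρbar)^[n] [0]) := by
    intro n
    induction n with
    | zero => simp [tauW, tau]
    | succ n ih =>
      rw [Function.iterate_succ_apply', Function.iterate_succ_apply', ih, hkey]
  -- nonemptiness
  have hne : ∀ n : ℕ, (applyN ρbar)^[n] [0] ≠ [] := by
    intro n
    induction n with
    | zero => simp
    | succ n ih =>
      rw [Function.iterate_succ_apply']
      cases h : (applyN ρbar)^[n] [0] with
      | nil => exact absurd h ih
      | cons k x =>
        simp [applyN, hρbar]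
  intro n _
  set x := (applyN ρbar)^[n] [0] with hx
  have hsplit : x = x.dropLast ++ [x.getLast (hne n)] := (List.dropLast_append_getLast _).symm
  have hmain : tauW (β n) ++ [AB.b] ++
      List.replicate (x.getLast (hne n)) AB.a = (applyW ρ)^[n] [AB.b] := by
    rw [hiter n, ← hx, hβ n, ← hx]
    conv_rhs => rw [hsplit]
    rw [tauW_append]
    simp [tauW, tau]
  constructor
  · exact ⟨_, hmain⟩
  · exact ((List.prefix_append _ [AB.b]).trans ⟨_, hmain⟩).isInfix
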